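/- For μ > 0, σ > 0, M > 0, and α ≥ 0, the value η(α) = α/M + ((1 − Mμ) + √(2αMσ² + (1−Mμ)²))/(M²σ²) satisfies the equation M·η(α) = α + (√(2η(α)σ² + μ²) − μ)/σ², and η is nonnegative and increasing in α. -/

import Mathlib

open Real Set

/-- The exponent `η(α)` of the first passage time to a lower level under release rate `M`. -/
noncomputable def etaExp (μ σ M α : ℝ) : ℝ :=
  α / M + ((1 - M * μ) + Real.sqrt (2 * α * M * σ ^ 2 + (1 - M * μ) ^ 2)) / (M ^ 2 * σ ^ 2)

/-! Writing `s = √(2αMσ² + (1 - Mμ)²)`, the definition gives `2ησ² + μ² = ((1 + s) / M)²`, so the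
square root in the equation is `(1 + s) / M` and the equation becomes a ring identity. Nonnegativity
holds because `s ≥ |1 - Mμ|`, and `η` is the strictly increasing `α / M` plus a monotone term. -/

lemma add_sqrt_add_sq_nonneg (c : ℝ) {t : ℝ} (ht : 0 ≤ t) : 0 ≤ c + √(t + c ^ 2) := by
  have := Real.neg_sqrt_le_of_sq_le (le_add_of_nonneg_left ht : c ^ 2 ≤ t + c ^ 2)
  linarith

lemma etaExp_nonneg (μ σ : ℝ) {M α : ℝ} (hM : 0 < M) (hα : 0 ≤ α) : 0 ≤ etaExp μ σ M α :=
  add_nonneg (div_nonneg hα hM.le)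
    (div_nonneg (add_sqrt_add_sq_nonneg _ (by positivity)) (by positivity))

lemma strictMono_etaExp (μ σ : ℝ) {M : ℝ} (hM : 0 < M) : StrictMono (etaExp μ σ M) := by
  refine (strictMono_div_right_of_pos hM).add_monotone fun a b hab ↦ ?_
  gcongr

lemma sqrt_two_mul_etaExp_mul_sq_add_sq (μ : ℝ) {σ M α : ℝ} (hσ : σ ≠ 0) (hM : 0 < M)
    (hα : 0 ≤ α) :
    √(2 * etaExp μ σ M α * σ ^ 2 + μ ^ 2)
      = (1 + √(2 * α * M * σ ^ 2 + (1 - M * μ) ^ 2)) / M := by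
  set s := √(2 * α * M * σ ^ 2 + (1 - M * μ) ^ 2) with hs
  have hs_sq : s ^ 2 = 2 * α * M * σ ^ 2 + (1 - M * μ) ^ 2 := Real.sq_sqrt (by positivity)
  have h_square : 2 * etaExp μ σ M α * σ ^ 2 + μ ^ 2 = ((1 + s) / M) ^ 2 := by
    rw [etaExp, ← hs]
    field_simp
    linear_combination -hs_sq
  rw [h_square, Real.sqrt_sq (by positivity)]

theorem etaExp_solves_equation_nonneg_increasing_general
    (μ σ M : ℝ) (hσ : 0 < σ) (hM : 0 < M) :
    (∀ α : ℝ, 0 ≤ α →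
        M * etaExp μ σ M α
          = α + (Real.sqrt (2 * etaExp μ σ M α * σ ^ 2 + μ ^ 2) - μ) / σ ^ 2) ∧
      (∀ α : ℝ, 0 ≤ α → 0 ≤ etaExp μ σ M α) ∧
      StrictMonoOn (etaExp μ σ M) (Set.Ici 0) := by
  refine ⟨fun α hα ↦ ?_, fun α ↦ etaExp_nonneg μ σ hM, (strictMono_etaExp μ σ hM).strictMonoOn _⟩
  rw [sqrt_two_mul_etaExp_mul_sq_add_sq μ hσ.ne' hM hα, etaExp]
  field_simp
  ring

theorem etaExp_solves_equation_nonneg_increasing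
    (μ σ M : ℝ) (hμ : 0 < μ) (hσ : 0 < σ) (hM : 0 < M) :
    (∀ α : ℝ, 0 ≤ α →
        M * etaExp μ σ M α
          = α + (Real.sqrt (2 * etaExp μ σ M α * σ ^ 2 + μ ^ 2) - μ) / σ ^ 2) ∧
      (∀ α : ℝ, 0 ≤ α → 0 ≤ etaExp μ σ M α) ∧
      StrictMonoOn (etaExp μ σ M) (Set.Ici 0) :=
  etaExp_solves_equation_nonneg_increasing_general μ σ M hσ hM
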